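/- Let 𝕋 be a pretheory and suppose the morphism equality f ≡ g : X → Y is derivable, where Y = (y₁:Y₁,…,yₙ:Yₙ). Then: (1) the judgment X ⊢ Yᵢ[f] ≡ Yᵢ[g] sort is derivable for each 1 ≤ i ≤ n; (2) f : X → Y and g : X → Y are context morphisms; (3) if moreover Y ⊢ U sort is derivable then X ⊢ U[f] ≡ U[g] sort is derivable; (4) if moreover Y ⊢ u : U is derivable then X ⊢ u[f] ≡ u[g] : U[f] is derivable; (5) if moreover h : Y → Z is a context morphism then the morphism equality h∘f ≡ h∘g : X → Z is derivable. -/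

import Mathlib

set_option linter.unusedVariables false

/-! # Syntax of generalized algebraic theories (following Cartmell / the paper's appendix) -/

namespace GATPaper

/-- A sort-and-term alphabet: a countably infinite set of variables, a set of sort
symbols and a set of term symbols. -/
structure Alphabet : Type 1 where
  Var : Type
  SortSym : Type
  TermSym : Type
  var_infinite : Infinite Var
  var_countable : Countable Var

attribute [instance] Alphabet.var_infinite Alphabet.var_countable

variable {A B : Alphabet}

/-- Term expressions over an alphabet. -/
inductive Expr (A : Alphabet) : Type where
  | var : A.Var → Expr A
  | app : A.TermSym → List (Expr A) → Expr A

/-- Sort expressions: a sort symbol applied to a list of term expressions. -/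
structure SortE (A : Alphabet) : Type where
  head : A.SortSym
  args : List (Expr A)

/-- Occurrence of a variable in a term expression. -/
inductive Occurs (x : A.Var) : Expr A → Prop where
  | var : Occurs x (Expr.var x)
  | app {t : A.TermSym} {es : List (Expr A)} {e : Expr A} :
      e ∈ es → Occurs x e → Occurs x (Expr.app t es)

/-- Occurrence of a variable in a sort expression. -/
def SOccurs (x : A.Var) (U : SortE A) : Prop := ∃ e ∈ U.args, Occurs x e

/-- Simultaneous substitution along a function on variables. -/
def Expr.subst (σ : A.Var → Expr A) : Expr A → Expr A
  | .var x => σ x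
  | .app t es => .app t (es.attach.map fun e => Expr.subst σ e.1)
termination_by e => sizeOf e
decreasing_by
  have := List.sizeOf_lt_of_mem e.2
  simp only [Expr.app.sizeOf_spec]
  omega

def SortE.subst (σ : A.Var → Expr A) (U : SortE A) : SortE A :=
  ⟨U.head, U.args.map (Expr.subst σ)⟩

open Classical in
/-- The function on variables determined by a finite list of substitution pairs
`(zᵢ, uᵢ)` (substituting `uᵢ` for `zᵢ`, first matching pair winning, all other
variables unchanged). -/
noncomputable def lookupV : List (A.Var × Expr A) → A.Var → Expr A
  | [], x => .var x
  | p :: ps, x => if p.1 = x then p.2 else lookupV ps x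

/-- The simultaneous substitution `e[u₁ | z₁, …, u_k | z_k]` where
`ps = [(z₁,u₁),…,(z_k,u_k)]`. -/
noncomputable def Expr.substL (e : Expr A) (ps : List (A.Var × Expr A)) : Expr A :=
  e.subst (lookupV ps)

noncomputable def SortE.substL (U : SortE A) (ps : List (A.Var × Expr A)) : SortE A :=
  U.subst (lookupV ps)

/-- A (pre)context is a finite list of (variable, sort expression) pairs. -/
abbrev PreCtx (A : Alphabet) := List (A.Var × SortE A)

/-- The list of variables of a precontext, as term expressions. -/
def ctxVars (X : PreCtx A) : List (Expr A) := X.map fun p => Expr.var p.1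

/-- The scoping condition of a precontext: the `i`-th sort expression only contains
variables among the first `i` variables. -/
def IsPreCtx (X : PreCtx A) : Prop :=
  ∀ i (hi : i < X.length) (v : A.Var),
    SOccurs v (X[i]'hi).2 → v ∈ (X.take i).map Prod.fst

/-- Substitution pairs sending the variables of `X` to the entries of `f`. -/
def mkSub (X : PreCtx A) (f : List (Expr A)) : List (A.Var × Expr A) :=
  (X.map Prod.fst).zip f

/-- `Xᵢ[f₁ | x₁, …, f_{i-1} | x_{i-1}]` (0-based: the `i`-th sort of `X`
substituted along the first `i` entries of `f`). -/
noncomputable def subPre (X : PreCtx A) (f : List (Expr A)) (i : ℕ) (hi : i < X.length) :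
    SortE A :=
  ((X[i]'hi).2).substL (mkSub (X.take i) (f.take i))

/-- Judgments: context judgments and the four kinds of standard judgments. -/
inductive Judg (A : Alphabet) : Type where
  | ctx (X : PreCtx A)
  | sort (X : PreCtx A) (U : SortE A)
  | term (X : PreCtx A) (u : Expr A) (U : SortE A)
  | sortEq (X : PreCtx A) (U V : SortE A)
  | termEq (X : PreCtx A) (u v : Expr A) (U : SortE A)

/-- The context of a judgment. -/
def Judg.ctxOf : Judg A → PreCtx A
  | .ctx X => X
  | .sort X _ => X
  | .term X _ _ => X
  | .sortEq X _ _ => X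
  | .termEq X _ _ _ => X

/-- The judgment introducing a sort symbol over the context `X`. -/
def introSort (X : PreCtx A) (S : A.SortSym) : Judg A := .sort X ⟨S, ctxVars X⟩

/-- The judgment introducing a term symbol over the context `X`, with sort `U`. -/
def introTerm (X : PreCtx A) (t : A.TermSym) (U : SortE A) : Judg A :=
  .term X (.app t (ctxVars X)) U

/-- A set of axioms is a pretheory if: no axiom is a context judgment, every
axiom's context is a precontext, every sort symbol has a unique introducing sort
axiom and there are no other sort axioms, and likewise for term symbols. -/
structure IsPretheory (Ax : Set (Judg A)) : Prop where
  no_ctx : ∀ X : PreCtx A, Judg.ctx X ∉ Ax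
  wf_ctx : ∀ J ∈ Ax, IsPreCtx J.ctxOf
  sort_intro : ∀ S : A.SortSym, ∃! X : PreCtx A, introSort X S ∈ Ax
  sort_shape : ∀ (X : PreCtx A) (U : SortE A), Judg.sort X U ∈ Ax → U.args = ctxVars X
  term_intro : ∀ t : A.TermSym, ∃! p : PreCtx A × SortE A, introTerm p.1 t p.2 ∈ Ax
  term_shape : ∀ (X : PreCtx A) (u : Expr A) (U : SortE A), Judg.term X u U ∈ Ax →
      ∃ t : A.TermSym, u = Expr.app t (ctxVars X)

/-- One inference step of the paper's system: `Step Ax D J` holds when `J` is the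
conclusion of an instance of one of the sixteen rules all of whose premises
satisfy `D`. -/
inductive Step (Ax : Set (Judg A)) (D : Judg A → Prop) : Judg A → Prop where
  | ctx_nil : Step Ax D (.ctx [])
  | ctx_cons {X : PreCtx A} {U : SortE A} {x : A.Var}
      (hs : D (.sort X U)) (hfresh : ∀ p ∈ X, p.1 ≠ x)
      (hpre : IsPreCtx (X ++ [(x, U)])) :
      Step Ax D (.ctx (X ++ [(x, U)]))
  | s1 {X : PreCtx A} {U : SortE A} (h : D (.sort X U)) : Step Ax D (.sortEq X U U)
  | s2 {X : PreCtx A} {U V : SortE A} (h : D (.sortEq X U V)) : Step Ax D (.sortEq X V U)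
  | s3 {X : PreCtx A} {U V W : SortE A}
      (h1 : D (.sortEq X U V)) (h2 : D (.sortEq X V W)) : Step Ax D (.sortEq X U W)
  | t1 {X : PreCtx A} {u : Expr A} {U : SortE A}
      (h : D (.term X u U)) : Step Ax D (.termEq X u u U)
  | t2 {X : PreCtx A} {u v : Expr A} {U : SortE A}
      (h : D (.termEq X u v U)) : Step Ax D (.termEq X v u U)
  | t3 {X : PreCtx A} {u v w : Expr A} {U : SortE A}
      (h1 : D (.termEq X u v U)) (h2 : D (.termEq X v w U)) : Step Ax D (.termEq X u w U)
  | seqt {X : PreCtx A} {U U' : SortE A} {u : Expr A}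
      (h1 : D (.sortEq X U U')) (h2 : D (.term X u U)) : Step Ax D (.term X u U')
  | seqteq {X : PreCtx A} {U U' : SortE A} {u u' : Expr A}
      (h1 : D (.sortEq X U U')) (h2 : D (.termEq X u u' U))
      (h3 : D (.term X u U')) (h4 : D (.term X u' U')) : Step Ax D (.termEq X u u' U')
  | var {X : PreCtx A} {i : ℕ} (hi : i < X.length)
      (h : D (.sort X (X[i]'hi).2)) :
      Step Ax D (.term X (.var (X[i]'hi).1) (X[i]'hi).2)
  | sA {X : PreCtx A} {U : SortE A} (hax : Judg.sort X U ∈ Ax) (h : D (.ctx X))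
      (hv : ∀ i (hi : i < X.length), D (.term X (.var (X[i]'hi).1) (X[i]'hi).2)) :
      Step Ax D (.sort X U)
  | tA {X : PreCtx A} {u : Expr A} {U : SortE A} (hax : Judg.term X u U ∈ Ax)
      (h : D (.sort X U))
      (hv : ∀ i (hi : i < X.length), D (.term X (.var (X[i]'hi).1) (X[i]'hi).2)) :
      Step Ax D (.term X u U)
  | seqA {X : PreCtx A} {U U' : SortE A} (hax : Judg.sortEq X U U' ∈ Ax)
      (h1 : D (.sort X U)) (h2 : D (.sort X U')) : Step Ax D (.sortEq X U U')
  | teqA {X : PreCtx A} {u u' : Expr A} {U : SortE A} (hax : Judg.termEq X u u' U ∈ Ax)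
      (h1 : D (.term X u U)) (h2 : D (.term X u' U)) : Step Ax D (.termEq X u u' U)
  | sSub {X : PreCtx A} {S : A.SortSym} (hax : introSort X S ∈ Ax)
      {Y : PreCtx A} (hY : IsPreCtx Y) {f : List (Expr A)} (hlen : f.length = X.length)
      (hJ : D (introSort X S)) (hYc : D (.ctx Y))
      (hargs : ∀ i (hi : i < X.length) (hif : i < f.length),
        D (.term Y (f[i]'hif) (subPre X f i hi))) :
      Step Ax D (.sort Y ⟨S, f⟩)
  | tSub {X : PreCtx A} {t : A.TermSym} {U : SortE A} (hax : introTerm X t U ∈ Ax)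
      {Y : PreCtx A} (hY : IsPreCtx Y) {f : List (Expr A)} (hlen : f.length = X.length)
      (hJ : D (introTerm X t U))
      (hU : D (.sort Y (U.substL (mkSub X f))))
      (hargs : ∀ i (hi : i < X.length) (hif : i < f.length),
        D (.term Y (f[i]'hif) (subPre X f i hi))) :
      Step Ax D (.term Y (.app t f) (U.substL (mkSub X f)))
  | seqSub1 {X : PreCtx A} {U U' : SortE A} (hax : Judg.sortEq X U U' ∈ Ax)
      {Y : PreCtx A} (hY : IsPreCtx Y) {f : List (Expr A)} (hlen : f.length = X.length)
      (hJ : D (.sortEq X U U'))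
      (h1 : D (.sort Y (U.substL (mkSub X f)))) (h2 : D (.sort Y (U'.substL (mkSub X f))))
      (hargs : ∀ i (hi : i < X.length) (hif : i < f.length),
        D (.term Y (f[i]'hif) (subPre X f i hi))) :
      Step Ax D (.sortEq Y (U.substL (mkSub X f)) (U'.substL (mkSub X f)))
  | seqSub2 {X : PreCtx A} {S : A.SortSym} (hax : introSort X S ∈ Ax)
      {Y : PreCtx A} (hY : IsPreCtx Y) {f g : List (Expr A)}
      (hlf : f.length = X.length) (hlg : g.length = X.length)
      (hJ : D (introSort X S))
      (h1 : D (.sort Y ⟨S, f⟩)) (h2 : D (.sort Y ⟨S, g⟩))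
      (hargs : ∀ i (hi : i < X.length) (hif : i < f.length) (hig : i < g.length),
        D (.termEq Y (f[i]'hif) (g[i]'hig) (subPre X f i hi))) :
      Step Ax D (.sortEq Y ⟨S, f⟩ ⟨S, g⟩)
  | teqSub1 {X : PreCtx A} {u u' : Expr A} {U : SortE A}
      (hax : Judg.termEq X u u' U ∈ Ax)
      {Y : PreCtx A} (hY : IsPreCtx Y) {f : List (Expr A)} (hlen : f.length = X.length)
      (hJ : D (.termEq X u u' U))
      (h1 : D (.term Y (u.substL (mkSub X f)) (U.substL (mkSub X f))))
      (h2 : D (.term Y (u'.substL (mkSub X f)) (U.substL (mkSub X f))))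
      (hargs : ∀ i (hi : i < X.length) (hif : i < f.length),
        D (.term Y (f[i]'hif) (subPre X f i hi))) :
      Step Ax D (.termEq Y (u.substL (mkSub X f)) (u'.substL (mkSub X f))
        (U.substL (mkSub X f)))
  | teqSub2 {X : PreCtx A} {t : A.TermSym} {U : SortE A} (hax : introTerm X t U ∈ Ax)
      {Y : PreCtx A} (hY : IsPreCtx Y) {f g : List (Expr A)}
      (hlf : f.length = X.length) (hlg : g.length = X.length)
      (hJ : D (introTerm X t U))
      (h1 : D (.term Y (.app t f) (U.substL (mkSub X f))))
      (h2 : D (.term Y (.app t g) (U.substL (mkSub X f))))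
      (hargs : ∀ i (hi : i < X.length) (hif : i < f.length) (hig : i < g.length),
        D (.termEq Y (f[i]'hif) (g[i]'hig) (subPre X f i hi))) :
      Step Ax D (.termEq Y (.app t f) (.app t g) (U.substL (mkSub X f)))

/-- `DerAt Ax n J`: `J` is the conclusion of an inference step in the `n`-th stage
`𝒟ₙ` of the recursive construction of the derivable judgments. -/
def DerAt (Ax : Set (Judg A)) : ℕ → Judg A → Prop
  | 0, _ => False
  | n + 1, J => DerAt Ax n J ∨ Step Ax (DerAt Ax n) J

/-- A judgment is derivable if it is the conclusion of a step of some stage. -/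
def Derivable (Ax : Set (Judg A)) (J : Judg A) : Prop := ∃ n, DerAt Ax n J

/-- The height of a (derivable) judgment: the least stage at which it appears. -/
noncomputable def ht (Ax : Set (Judg A)) (J : Judg A) : ℕ := sInf {n | DerAt Ax n J}

/-- The height of a context: `0` for the empty context, and the height of
`∂X ⊢ Xₙ sort` otherwise. -/
noncomputable def htCtx (Ax : Set (Judg A)) (X : PreCtx A) : ℕ :=
  match X with
  | [] => 0
  | p :: X' =>
      ht Ax (.sort ((p :: X').dropLast) (((p :: X').getLast (List.cons_ne_nil p X')).2))

/-- A generalized algebraic theory: a pretheory all of whose axioms are derivable. -/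
def IsGAT (Ax : Set (Judg A)) : Prop := IsPretheory Ax ∧ ∀ J ∈ Ax, Derivable Ax J

/-- The partial term judgment `X ⊢ u term` is derivable. -/
def DerTerm (Ax : Set (Judg A)) (X : PreCtx A) (u : Expr A) : Prop :=
  ∃ U, Derivable Ax (.term X u U)

/-- The partial term equality judgment `X ⊢ u ≡ v term` is derivable. -/
def DerTermEq (Ax : Set (Judg A)) (X : PreCtx A) (u v : Expr A) : Prop :=
  ∃ U, Derivable Ax (.termEq X u v U)

/-- Height of a derivable partial term judgment: the minimum of the heights of
`X ⊢ u : U` over all `U`. -/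
noncomputable def htTerm (Ax : Set (Judg A)) (X : PreCtx A) (u : Expr A) : ℕ :=
  sInf {n | ∃ U, DerAt Ax n (.term X u U)}

/-- `f` is a context morphism from `X` to `Y`. -/
def IsMor (Ax : Set (Judg A)) (X Y : PreCtx A) (f : List (Expr A)) : Prop :=
  Derivable Ax (.ctx X) ∧ Derivable Ax (.ctx Y) ∧ f.length = Y.length ∧
  ∀ i (hi : i < Y.length) (hif : i < f.length),
    Derivable Ax (.term X (f[i]'hif) (subPre Y f i hi))

/-- The morphism equality `f ≡ g : X → Y` is derivable. -/
def MorEq (Ax : Set (Judg A)) (X Y : PreCtx A) (f g : List (Expr A)) : Prop :=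
  IsMor Ax X Y f ∧ IsMor Ax X Y g ∧
  ∀ i (hi : i < Y.length) (hif : i < f.length) (hig : i < g.length),
    Derivable Ax (.termEq X (f[i]'hif) (g[i]'hig) (subPre Y f i hi))

/-- The context equality `X ≡ Y ctx` is derivable. -/
def CtxEq (Ax : Set (Judg A)) (X Y : PreCtx A) : Prop :=
  X.length = Y.length ∧ Derivable Ax (.ctx X) ∧ Derivable Ax (.ctx Y) ∧
  ∀ i (hX : i < X.length) (hY : i < Y.length),
    Derivable Ax (.sortEq (X.take i) (X[i]'hX).2
      (((Y[i]'hY).2).substL (mkSub (Y.take i) (ctxVars (X.take i)))))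

/-- Height of a context morphism. -/
noncomputable def htMor (Ax : Set (Judg A)) (X Y : PreCtx A) (f : List (Expr A)) : ℕ :=
  max (htCtx Ax X) (max (htCtx Ax Y)
    ((Finset.range Y.length).sup fun i =>
      if h : i < Y.length ∧ i < f.length then
        ht Ax (.term X (f[i]'h.2) (subPre Y f i h.1))
      else 0))

/-- Height of a morphism equality. -/
noncomputable def htMorEq (Ax : Set (Judg A)) (X Y : PreCtx A) (f g : List (Expr A)) : ℕ :=
  max (htMor Ax X Y f) (max (htMor Ax X Y g)
    ((Finset.range Y.length).sup fun i =>
      if h : i < Y.length ∧ i < f.length ∧ i < g.length then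
        ht Ax (.termEq X (f[i]'h.2.1) (g[i]'h.2.2) (subPre Y f i h.1))
      else 0))

/-- The composite `g ∘ f` of tuples of term expressions, where `f : X → Y` and
`g : Y → Z`: the `i`-th entry is `gᵢ[f]`. -/
noncomputable def compMor (Y : PreCtx A) (f g : List (Expr A)) : List (Expr A) :=
  g.map fun e => e.substL (mkSub Y f)

/-- The canonical sort `𝒮(u)` of a term in a context (as a relation). -/
inductive CanonSort (Ax : Set (Judg A)) (X : PreCtx A) : Expr A → SortE A → Prop where
  | var {i : ℕ} (hi : i < X.length) : CanonSort Ax X (.var (X[i]'hi).1) (X[i]'hi).2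
  | app {t : A.TermSym} {f : List (Expr A)} {Xa : PreCtx A} {V : SortE A}
      (hax : introTerm Xa t V ∈ Ax) :
      CanonSort Ax X (.app t f) (V.substL (mkSub Xa f))

/-! Everything rests on one substitution lemma, proved by induction on derivations: a
derivable judgment over `Y` stays derivable after substituting along any context morphism
`f : X → Y`, and for sorts and terms a morphism equality `f ≡ g : X → Y` yields
`X ⊢ U[f] ≡ U[g]` and `X ⊢ u[f] ≡ u[g] : U[f]`. Axioms are instantiated along `f` by the
substitution rules themselves, and a substitution instance `J[a]` of an axiom
is re-instantiated along the composite `a ∘ f`, since `J[a][f] = J[a ∘ f]`; this identity needs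
the variables of `J` to lie in its context, which holds for every derivable judgment.
Part (1) applies the lemma to `y₁ : Y₁, …, y_{i-1} : Y_{i-1} ⊢ Yᵢ sort`, part (5) to the
components of `h`. -/

@[elab_as_elim]
theorem Expr.induction {motive : Expr A → Prop} (var : ∀ x, motive (.var x))
    (app : ∀ t es, (∀ e ∈ es, motive e) → motive (.app t es)) (e : Expr A) : motive e :=
  Expr.rec (motive_2 := fun es => ∀ e ∈ es, motive e) var app
    (fun _ h => absurd h List.not_mem_nil) (fun _ _ he hes => List.forall_mem_cons.2 ⟨he, hes⟩) e

@[simp] theorem Expr.subst_var (σ : A.Var → Expr A) (x : A.Var) :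
    Expr.subst σ (.var x) = σ x := by
  rw [Expr.subst]

@[simp] theorem Expr.subst_app (σ : A.Var → Expr A) (t : A.TermSym) (es : List (Expr A)) :
    Expr.subst σ (.app t es) = .app t (es.map (Expr.subst σ)) := by
  rw [Expr.subst, List.map_attach_eq_pmap, List.pmap_eq_map]

theorem Expr.subst_congr {σ τ : A.Var → Expr A} (e : Expr A)
    (h : ∀ v, Occurs v e → σ v = τ v) : e.subst σ = e.subst τ := by
  induction e using Expr.induction with
  | var x => simpa using h x .var
  | app t es ih =>
    simp only [Expr.subst_app, Expr.app.injEq, true_and]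
    exact List.map_congr_left fun e he => ih e he fun v hv => h v (.app he hv)

theorem Expr.subst_subst (σ τ : A.Var → Expr A) (e : Expr A) :
    (e.subst σ).subst τ = e.subst (fun x => (σ x).subst τ) := by
  induction e using Expr.induction with
  | var x => simp
  | app t es ih =>
    simp only [Expr.subst_app, List.map_map, Expr.app.injEq, true_and]
    exact List.map_congr_left ih

theorem SortE.subst_congr {σ τ : A.Var → Expr A} (U : SortE A)
    (h : ∀ v, SOccurs v U → σ v = τ v) : U.subst σ = U.subst τ :=
  congrArg _ (List.map_congr_left fun e he => e.subst_congr fun v hv => h v ⟨e, he, hv⟩)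

theorem SortE.subst_subst (σ τ : A.Var → Expr A) (U : SortE A) :
    (U.subst σ).subst τ = U.subst (fun x => (σ x).subst τ) := by
  simp [SortE.subst, Function.comp_def, Expr.subst_subst]

theorem lookupV_append {ps qs : List (A.Var × Expr A)} {v : A.Var}
    (h : v ∈ ps.map Prod.fst) : lookupV (ps ++ qs) v = lookupV ps v := by
  induction ps with
  | nil => simp at h
  | cons p ps ih =>
    by_cases hp : p.1 = v
    · simp [lookupV, hp]
    · simp only [List.cons_append, lookupV, if_neg hp]
      exact ih (by simpa [Ne.symm hp] using h)

theorem lookupV_map (h : Expr A → Expr A) {ps : List (A.Var × Expr A)} {v : A.Var}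
    (hv : v ∈ ps.map Prod.fst) :
    lookupV (ps.map fun p => (p.1, h p.2)) v = h (lookupV ps v) := by
  induction ps with
  | nil => simp at hv
  | cons p ps ih =>
    by_cases hp : p.1 = v
    · simp [lookupV, hp]
    · simp only [List.map_cons, lookupV, if_neg hp]
      exact ih (by simpa [Ne.symm hp] using hv)

@[simp] theorem map_fst_mkSub {X : PreCtx A} {f : List (Expr A)} (hlen : X.length ≤ f.length) :
    (mkSub X f).map Prod.fst = X.map Prod.fst := by
  simp [mkSub, List.map_fst_zip, hlen]

theorem mkSub_take (X : PreCtx A) (f : List (Expr A)) (i : ℕ) :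
    mkSub (X.take i) (f.take i) = (mkSub X f).take i := by
  simp [mkSub, List.map_take, List.zip, List.take_zipWith]

theorem mkSub_map (X : PreCtx A) (f : List (Expr A)) (h : Expr A → Expr A) :
    mkSub X (f.map h) = (mkSub X f).map fun p => (p.1, h p.2) := by
  simp [mkSub, List.zip_map_right, Prod.map_def]

theorem lookupV_mkSub_getElem {X : PreCtx A} {f : List (Expr A)} (hnd : (X.map Prod.fst).Nodup)
    {i : ℕ} (hi : i < X.length) (hif : i < f.length) :
    lookupV (mkSub X f) (X[i]'hi).1 = f[i]'hif := by
  induction X generalizing f i with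
  | nil => simp at hi
  | cons p X ih =>
    obtain _ | ⟨e, f⟩ := f
    · simp at hif
    obtain _ | i := i
    · simp [mkSub, lookupV]
    rw [List.map_cons, List.nodup_cons] at hnd
    have hne : p.1 ≠ (X[i]'(by simpa using hi)).1 := fun hcon =>
      hnd.1 (hcon ▸ List.mem_map_of_mem (List.getElem_mem _))
    simp only [List.getElem_cons_succ, mkSub, List.map_cons, List.zip_cons_cons, lookupV,
      if_neg hne]
    exact ih hnd.2 _ _

@[simp] theorem Expr.substL_var (ps : List (A.Var × Expr A)) (x : A.Var) :
    (Expr.var x).substL ps = lookupV ps x := by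
  simp [Expr.substL]

@[simp] theorem Expr.substL_app (ps : List (A.Var × Expr A)) (t : A.TermSym)
    (es : List (Expr A)) :
    (Expr.app t es).substL ps = .app t (es.map (·.substL ps)) := by
  simp [Expr.substL]

theorem SortE.substL_mk (S : A.SortSym) (es : List (Expr A)) (ps : List (A.Var × Expr A)) :
    (SortE.mk S es).substL ps = ⟨S, es.map (·.substL ps)⟩ := rfl

def Expr.ScopedIn (u : Expr A) (X : PreCtx A) : Prop := ∀ v, Occurs v u → v ∈ X.map Prod.fst

def SortE.ScopedIn (U : SortE A) (X : PreCtx A) : Prop := ∀ v, SOccurs v U → v ∈ X.map Prod.fst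

theorem lookupV_mkSub_substL {Z : PreCtx A} {a : List (Expr A)} (hlen : a.length = Z.length)
    (ps : List (A.Var × Expr A)) {v : A.Var} (hv : v ∈ Z.map Prod.fst) :
    (lookupV (mkSub Z a) v).substL ps = lookupV (mkSub Z (a.map (·.substL ps))) v := by
  rw [mkSub_map, lookupV_map (·.substL ps) (by rwa [map_fst_mkSub hlen.ge])]

theorem Expr.substL_mkSub_substL {Z : PreCtx A} {a : List (Expr A)} {e : Expr A}
    (he : e.ScopedIn Z) (hlen : a.length = Z.length) (ps : List (A.Var × Expr A)) :
    (e.substL (mkSub Z a)).substL ps = e.substL (mkSub Z (a.map (·.substL ps))) := by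
  rw [Expr.substL, Expr.substL, Expr.subst_subst]
  exact e.subst_congr fun v hv => lookupV_mkSub_substL hlen ps (he v hv)

theorem SortE.substL_mkSub_substL {Z : PreCtx A} {a : List (Expr A)} {U : SortE A}
    (hU : U.ScopedIn Z) (hlen : a.length = Z.length) (ps : List (A.Var × Expr A)) :
    (U.substL (mkSub Z a)).substL ps = U.substL (mkSub Z (a.map (·.substL ps))) := by
  rw [SortE.substL, SortE.substL, SortE.subst_subst]
  exact U.subst_congr fun v hv => lookupV_mkSub_substL hlen ps (hU v hv)

theorem subPre_substL {Z : PreCtx A} (hZ : IsPreCtx Z) {a : List (Expr A)}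
    (hlen : a.length = Z.length) (Y : PreCtx A) (f : List (Expr A)) {i : ℕ}
    (hi : i < Z.length) :
    (subPre Z a i hi).substL (mkSub Y f) = subPre Z (compMor Y f a) i hi := by
  unfold subPre compMor
  rw [SortE.substL_mkSub_substL (hZ i hi) (by simp [hlen]), List.map_take]

theorem substL_mkSub_eq_subPre {Z : PreCtx A} (hZ : IsPreCtx Z) {f : List (Expr A)}
    (hlen : f.length = Z.length) {i : ℕ} (hi : i < Z.length) :
    (Z[i]'hi).2.substL (mkSub Z f) = subPre Z f i hi := by
  refine SortE.subst_congr _ fun v hv => ?_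
  have hv' : v ∈ ((mkSub Z f).take i).map Prod.fst := by
    rw [← mkSub_take, map_fst_mkSub (by simp [hlen])]
    exact hZ i hi v hv
  conv_lhs => rw [← List.take_append_drop i (mkSub Z f), lookupV_append hv']
  rw [mkSub_take]

theorem map_substL_ctxVars {Z : PreCtx A} (hZ : (Z.map Prod.fst).Nodup) {f : List (Expr A)}
    (hlen : f.length = Z.length) :
    (ctxVars Z).map (·.substL (mkSub Z f)) = f := by
  refine List.ext_getElem (by simp [ctxVars, hlen]) fun i hi hif => ?_
  simp only [ctxVars, List.getElem_map, Expr.substL_var]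
  exact lookupV_mkSub_getElem hZ (by simpa [ctxVars] using hi) hif

section Composition

variable {Y : PreCtx A} {f : List (Expr A)}

theorem getElem_compMor {a : List (Expr A)} {i : ℕ} (hi : i < (compMor Y f a).length) :
    (compMor Y f a)[i] = (a[i]'(by simpa [compMor] using hi)).substL (mkSub Y f) :=
  List.getElem_map _

@[simp] theorem length_compMor (a : List (Expr A)) : (compMor Y f a).length = a.length :=
  List.length_map _

theorem Expr.substL_mkSub_app (t : A.TermSym) (a : List (Expr A)) :
    (Expr.app t a).substL (mkSub Y f) = .app t (compMor Y f a) :=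
  Expr.substL_app _ t a

theorem Expr.substL_mkSub_var (hY : (Y.map Prod.fst).Nodup) {i : ℕ} (hi : i < Y.length)
    (hif : i < f.length) : (Expr.var (Y[i]'hi).1).substL (mkSub Y f) = f[i] := by
  rw [Expr.substL_var, lookupV_mkSub_getElem hY hi hif]

theorem SortE.substL_mkSub_ctxVars (hY : (Y.map Prod.fst).Nodup) (hlen : f.length = Y.length)
    (S : A.SortSym) : (SortE.mk S (ctxVars Y)).substL (mkSub Y f) = ⟨S, f⟩ := by
  rw [SortE.substL_mk, map_substL_ctxVars hY hlen]

theorem Expr.substL_mkSub_ctxVars (hY : (Y.map Prod.fst).Nodup) (hlen : f.length = Y.length)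
    (t : A.TermSym) : (Expr.app t (ctxVars Y)).substL (mkSub Y f) = .app t f := by
  rw [Expr.substL_app, map_substL_ctxVars hY hlen]

end Composition

theorem subPre_take {Z : PreCtx A} {f : List (Expr A)} {i j : ℕ} (hji : j < i)
    (hj : j < (Z.take i).length) :
    subPre (Z.take i) (f.take i) j hj = subPre Z f j (by simp at hj; omega) := by
  simp only [subPre, List.take_take, min_eq_left hji.le, List.getElem_take]

theorem eventually_forall_lt {ι : Type*} {l : Filter ι} {k : ℕ}
    {p : ∀ i, i < k → ι → Prop} (h : ∀ i hi, ∀ᶠ x in l, p i hi x) :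
    ∀ᶠ x in l, ∀ i hi, p i hi x :=
  (Filter.eventually_all.2 fun i : Fin k => h i i.2).mono fun _ hx i hi => hx ⟨i, hi⟩

section Derivability

variable {Ax : Set (Judg A)}

open Filter

/-- Every rule has finitely many premises. With `l = atTop` this closes `Derivable` under the
rules; with `l = pure ()` it is monotonicity of `Step`. -/
theorem Step.eventually {ι : Type*} {l : Filter ι} {D : Judg A → Prop} {P : ι → Judg A → Prop}
    (hD : ∀ J, D J → ∀ᶠ x in l, P x J) {J : Judg A} (h : Step Ax D J) :
    ∀ᶠ x in l, Step Ax (P x) J := by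
  have args {k n : ℕ} {F : ∀ i, i < k → i < n → Judg A} (hF : ∀ i hi hn, D (F i hi hn)) :
      ∀ᶠ x in l, ∀ i hi hn, P x (F i hi hn) :=
    eventually_forall_lt fun i hi => eventually_all.2 fun hn => hD _ (hF i hi hn)
  have args₂ {k n m : ℕ} {F : ∀ i, i < k → i < n → i < m → Judg A}
      (hF : ∀ i hi hn hm, D (F i hi hn hm)) : ∀ᶠ x in l, ∀ i hi hn hm, P x (F i hi hn hm) :=
    eventually_forall_lt fun i hi =>
      eventually_all.2 fun hn => eventually_all.2 fun hm => hD _ (hF i hi hn hm)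
  cases h with
  | ctx_nil => exact .of_forall fun _ => .ctx_nil
  | ctx_cons hs hfresh hpre => exact (hD _ hs).mono fun _ hs => .ctx_cons hs hfresh hpre
  | s1 h => exact (hD _ h).mono fun _ => .s1
  | s2 h => exact (hD _ h).mono fun _ => .s2
  | s3 h₁ h₂ => exact ((hD _ h₁).and (hD _ h₂)).mono fun _ h => .s3 h.1 h.2
  | t1 h => exact (hD _ h).mono fun _ => .t1
  | t2 h => exact (hD _ h).mono fun _ => .t2
  | t3 h₁ h₂ => exact ((hD _ h₁).and (hD _ h₂)).mono fun _ h => .t3 h.1 h.2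
  | seqt h₁ h₂ => exact ((hD _ h₁).and (hD _ h₂)).mono fun _ h => .seqt h.1 h.2
  | seqteq h₁ h₂ h₃ h₄ =>
    exact (((hD _ h₁).and (hD _ h₂)).and ((hD _ h₃).and (hD _ h₄))).mono
      fun _ h => .seqteq h.1.1 h.1.2 h.2.1 h.2.2
  | var hi h => exact (hD _ h).mono fun _ => .var hi
  | sA hax h hv =>
    exact ((hD _ h).and (eventually_forall_lt fun i hi => hD _ (hv i hi))).mono
      fun _ h => .sA hax h.1 h.2
  | tA hax h hv =>
    exact ((hD _ h).and (eventually_forall_lt fun i hi => hD _ (hv i hi))).mono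
      fun _ h => .tA hax h.1 h.2
  | seqA hax h₁ h₂ => exact ((hD _ h₁).and (hD _ h₂)).mono fun _ h => .seqA hax h.1 h.2
  | teqA hax h₁ h₂ => exact ((hD _ h₁).and (hD _ h₂)).mono fun _ h => .teqA hax h.1 h.2
  | sSub hax hY hlen hJ hYc hargs =>
    exact (((hD _ hJ).and (hD _ hYc)).and (args hargs)).mono
      fun _ h => .sSub hax hY hlen h.1.1 h.1.2 h.2
  | tSub hax hY hlen hJ hU hargs =>
    exact (((hD _ hJ).and (hD _ hU)).and (args hargs)).mono
      fun _ h => .tSub hax hY hlen h.1.1 h.1.2 h.2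
  | seqSub1 hax hY hlen hJ h₁ h₂ hargs =>
    exact (((hD _ hJ).and (hD _ h₁)).and ((hD _ h₂).and (args hargs))).mono
      fun _ h => .seqSub1 hax hY hlen h.1.1 h.1.2 h.2.1 h.2.2
  | seqSub2 hax hY hlf hlg hJ h₁ h₂ hargs =>
    exact (((hD _ hJ).and (hD _ h₁)).and ((hD _ h₂).and (args₂ hargs))).mono
      fun _ h => .seqSub2 hax hY hlf hlg h.1.1 h.1.2 h.2.1 h.2.2
  | teqSub1 hax hY hlen hJ h₁ h₂ hargs =>
    exact (((hD _ hJ).and (hD _ h₁)).and ((hD _ h₂).and (args hargs))).mono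
      fun _ h => .teqSub1 hax hY hlen h.1.1 h.1.2 h.2.1 h.2.2
  | teqSub2 hax hY hlf hlg hJ h₁ h₂ hargs =>
    exact (((hD _ hJ).and (hD _ h₁)).and ((hD _ h₂).and (args₂ hargs))).mono
      fun _ h => .teqSub2 hax hY hlf hlg h.1.1 h.1.2 h.2.1 h.2.2

theorem Step.mono {D E : Judg A → Prop} (hDE : ∀ J, D J → E J) {J : Judg A}
    (h : Step Ax D J) : Step Ax E J :=
  eventually_pure.1 (h.eventually (l := pure ()) (P := fun _ => E) fun J hJ =>
    eventually_pure.2 (hDE J hJ))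

theorem derAt_monotone : Monotone (DerAt Ax) := monotone_nat_of_le_succ fun _ _ => Or.inl

theorem derivable_iff_eventually {J : Judg A} :
    Derivable Ax J ↔ ∀ᶠ n in atTop, DerAt Ax n J :=
  ⟨fun ⟨n, h⟩ => eventually_atTop.2 ⟨n, fun _ hm => derAt_monotone hm J h⟩, fun h => h.exists⟩

theorem derivable_step {J : Judg A} (h : Step Ax (Derivable Ax) J) : Derivable Ax J :=
  let ⟨n, hn⟩ := (h.eventually fun _ => derivable_iff_eventually.1).exists
  ⟨n + 1, Or.inr hn⟩

theorem Derivable.induction {P : Judg A → Prop}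
    (step : ∀ J, Step Ax (fun J => Derivable Ax J ∧ P J) J → P J) {J : Judg A}
    (h : Derivable Ax J) : P J := by
  obtain ⟨n, h⟩ := h
  induction n generalizing J with
  | zero => exact h.elim
  | succ n ih => exact h.elim ih fun h => step J (h.mono fun _ hJ => ⟨⟨n, hJ⟩, ih hJ⟩)

theorem Derivable.step {J : Judg A} (h : Derivable Ax J) : Step Ax (Derivable Ax) J :=
  h.induction fun _ hJ => hJ.mono fun _ => And.left

section Equality

variable {X : PreCtx A} {U V W : SortE A} {u v : Expr A}

theorem Derivable.sortEq_refl (h : Derivable Ax (.sort X U)) : Derivable Ax (.sortEq X U U) :=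
  derivable_step (.s1 h)

theorem Derivable.sortEq_symm (h : Derivable Ax (.sortEq X U V)) :
    Derivable Ax (.sortEq X V U) :=
  derivable_step (.s2 h)

theorem Derivable.sortEq_trans (h₁ : Derivable Ax (.sortEq X U V))
    (h₂ : Derivable Ax (.sortEq X V W)) : Derivable Ax (.sortEq X U W) :=
  derivable_step (.s3 h₁ h₂)

theorem Derivable.term_conv (hU : Derivable Ax (.sortEq X U V)) (hu : Derivable Ax (.term X u U)) :
    Derivable Ax (.term X u V) :=
  derivable_step (.seqt hU hu)

theorem Derivable.termEq_conv (hUV : Derivable Ax (.sortEq X U V)) (huv : Derivable Ax (.termEq X u v U))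
    (hu : Derivable Ax (.term X u V)) (hv : Derivable Ax (.term X v V)) :
    Derivable Ax (.termEq X u v V) :=
  derivable_step (.seqteq hUV huv hu hv)

end Equality

theorem Derivable.ctx_of_sort {X : PreCtx A} {U : SortE A} (h : Derivable Ax (.sort X U)) :
    Derivable Ax (.ctx X) := by
  cases h.step with
  | sA _ hX _ => exact hX
  | sSub _ _ _ _ hY _ => exact hY

theorem Derivable.of_ctx_concat {X : PreCtx A} {x : A.Var} {U : SortE A}
    (h : Derivable Ax (.ctx (X ++ [(x, U)]))) :
    Derivable Ax (.sort X U) ∧ (∀ p ∈ X, p.1 ≠ x) ∧ IsPreCtx (X ++ [(x, U)]) := by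
  generalize hJ : Judg.ctx (X ++ [(x, U)]) = J at h
  cases h.step with
  | ctx_nil => simp at hJ
  | ctx_cons hs hfresh hpre =>
    obtain ⟨rfl, hp⟩ := List.append_inj' (Judg.ctx.inj hJ) rfl
    simp only [List.cons.injEq, Prod.mk.injEq, and_true] at hp
    obtain ⟨rfl, rfl⟩ := hp
    exact ⟨hs, hfresh, hpre⟩
  | _ => cases hJ

theorem Derivable.isPreCtx {X : PreCtx A} (h : Derivable Ax (.ctx X)) : IsPreCtx X := by
  induction X using List.reverseRecOn with
  | nil => intro i hi; simp at hi
  | append_singleton X p _ => exact h.of_ctx_concat.2.2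

theorem Derivable.nodup_ctx {X : PreCtx A} (h : Derivable Ax (.ctx X)) :
    (X.map Prod.fst).Nodup := by
  induction X using List.reverseRecOn with
  | nil => exact List.nodup_nil
  | append_singleton X p ih =>
    obtain ⟨hs, hfresh, -⟩ := h.of_ctx_concat
    simpa [List.nodup_append, ih hs.ctx_of_sort] using fun q hq => hfresh q hq

theorem Derivable.sort_of_ctx {X : PreCtx A} (h : Derivable Ax (.ctx X)) (i : ℕ)
    (hi : i < X.length) : Derivable Ax (.sort (X.take i) (X[i]'hi).2) := by
  induction X using List.reverseRecOn with
  | nil => simp at hi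
  | append_singleton X p ih =>
    obtain ⟨hs, -, -⟩ := h.of_ctx_concat
    obtain hi' | rfl := (Nat.lt_or_eq_of_le (by simpa using hi : i ≤ X.length))
    · simpa [List.take_append_of_le_length hi'.le, List.getElem_append_left hi'] using
        ih hs.ctx_of_sort hi'
    · simpa using hs

end Derivability

section Scoping

variable {Y : PreCtx A}

theorem Expr.scopedIn_var {i : ℕ} (hi : i < Y.length) : (Expr.var (Y[i]'hi).1).ScopedIn Y := by
  rintro v ⟨⟩
  exact List.mem_map_of_mem (List.getElem_mem hi)

theorem Expr.ScopedIn.app {t : A.TermSym} {es : List (Expr A)} (h : ∀ e ∈ es, e.ScopedIn Y) :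
    (Expr.app t es).ScopedIn Y := by
  rintro v (_ | ⟨he, hv⟩)
  exact h _ he v hv

theorem SortE.ScopedIn.mk {S : A.SortSym} {es : List (Expr A)} (h : ∀ e ∈ es, e.ScopedIn Y) :
    (SortE.mk S es).ScopedIn Y := by
  rintro v ⟨e, he, hv⟩
  exact h e he v hv

theorem scopedIn_of_mem_ctxVars {e : Expr A} (he : e ∈ ctxVars Y) : e.ScopedIn Y := by
  obtain ⟨i, hi, rfl⟩ := List.mem_iff_getElem.1 he
  simpa [ctxVars] using Expr.scopedIn_var (Y := Y) (by simpa [ctxVars] using hi)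

def Judg.Scoped : Judg A → Prop
  | .ctx _ => True
  | .sort X U => U.ScopedIn X
  | .term X u U => u.ScopedIn X ∧ U.ScopedIn X
  | .sortEq X U V => U.ScopedIn X ∧ V.ScopedIn X
  | .termEq X u v U => u.ScopedIn X ∧ v.ScopedIn X ∧ U.ScopedIn X

end Scoping

theorem Derivable.scoped {Ax : Set (Judg A)} (hAx : IsPretheory Ax) {J : Judg A}
    (h : Derivable Ax J) : J.Scoped := by
  refine Derivable.induction (P := Judg.Scoped) (fun J h => ?_) h
  cases h with
  | ctx_nil | ctx_cons => trivial
  | s1 h => exact ⟨h.2, h.2⟩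
  | s2 h => exact ⟨h.2.2, h.2.1⟩
  | s3 h₁ h₂ => exact ⟨h₁.2.1, h₂.2.2⟩
  | t1 h => exact ⟨h.2.1, h.2.1, h.2.2⟩
  | t2 h => exact ⟨h.2.2.1, h.2.1, h.2.2.2⟩
  | t3 h₁ h₂ => exact ⟨h₁.2.1, h₂.2.2.1, h₁.2.2.2⟩
  | seqt h₁ h₂ => exact ⟨h₂.2.1, h₁.2.2⟩
  | seqteq h₁ h₂ h₃ h₄ => exact ⟨h₃.2.1, h₄.2.1, h₃.2.2⟩
  | var hi h => exact ⟨Expr.scopedIn_var hi, h.2⟩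
  | @sA X U hax _ _ =>
    rw [show U = ⟨U.head, ctxVars X⟩ from congrArg (SortE.mk U.head) (hAx.sort_shape X U hax)]
    exact .mk fun _ => scopedIn_of_mem_ctxVars
  | @tA X u U hax h _ =>
    obtain ⟨t, rfl⟩ := hAx.term_shape X u U hax
    exact ⟨.app fun _ => scopedIn_of_mem_ctxVars, h.2⟩
  | seqA _ h₁ h₂ => exact ⟨h₁.2, h₂.2⟩
  | teqA _ h₁ h₂ => exact ⟨h₁.2.1, h₂.2.1, h₁.2.2⟩
  | sSub _ _ hlen _ _ hargs =>
    exact .mk (List.forall_mem_iff_getElem.2 fun i hi => (hargs i (hlen ▸ hi) hi).2.1)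
  | tSub _ _ hlen _ hU hargs =>
    exact ⟨.app (List.forall_mem_iff_getElem.2 fun i hi => (hargs i (hlen ▸ hi) hi).2.1),
      hU.2⟩
  | seqSub1 _ _ _ _ h₁ h₂ _ | seqSub2 _ _ _ _ _ h₁ h₂ _ => exact ⟨h₁.2, h₂.2⟩
  | teqSub1 _ _ _ _ h₁ h₂ _ | teqSub2 _ _ _ _ _ h₁ h₂ _ => exact ⟨h₁.2.1, h₂.2.1, h₁.2.2⟩

section Stability

variable {Ax : Set (Judg A)} {X Y Z : PreCtx A} {f g a b : List (Expr A)}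
  {U V W : SortE A} {u v : Expr A}

/-- The invariant of the induction on derivations. The mixed equation `U[f] ≡ V[g]` for sort
equalities is what the symmetry and conversion rules need; term equalities need no clause for
morphism equalities. -/
def SubstStable (Ax : Set (Judg A)) : Judg A → Prop
  | .ctx _ => True
  | .sort Y U =>
      (∀ X f, IsMor Ax X Y f → Derivable Ax (.sort X (U.substL (mkSub Y f)))) ∧
      (∀ X f g, MorEq Ax X Y f g →
        Derivable Ax (.sortEq X (U.substL (mkSub Y f)) (U.substL (mkSub Y g))))
  | .term Y u U =>
      (∀ X f, IsMor Ax X Y f →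
        Derivable Ax (.term X (u.substL (mkSub Y f)) (U.substL (mkSub Y f)))) ∧
      (∀ X f g, MorEq Ax X Y f g →
        Derivable Ax (.termEq X (u.substL (mkSub Y f)) (u.substL (mkSub Y g))
          (U.substL (mkSub Y f))))
  | .sortEq Y U V =>
      (∀ X f, IsMor Ax X Y f →
        Derivable Ax (.sortEq X (U.substL (mkSub Y f)) (V.substL (mkSub Y f)))) ∧
      (∀ X f g, MorEq Ax X Y f g →
        Derivable Ax (.sortEq X (U.substL (mkSub Y f)) (V.substL (mkSub Y g))))
  | .termEq Y u v U =>
      ∀ X f, IsMor Ax X Y f →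
        Derivable Ax (.termEq X (u.substL (mkSub Y f)) (v.substL (mkSub Y f))
          (U.substL (mkSub Y f)))

theorem compMor_args (hZ : IsPreCtx Z) (hlen : a.length = Z.length)
    (ha : ∀ i (hi : i < Z.length) (hia : i < a.length),
      SubstStable Ax (.term Y (a[i]'hia) (subPre Z a i hi)))
    (hf : IsMor Ax X Y f) (i : ℕ) (hi : i < Z.length) (hif : i < (compMor Y f a).length) :
    Derivable Ax (.term X ((compMor Y f a)[i]'hif) (subPre Z (compMor Y f a) i hi)) := by
  rw [getElem_compMor, ← subPre_substL hZ hlen]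
  exact (ha i hi _).1 X f hf

theorem compMor_args_eq (hZ : IsPreCtx Z) (hlen : a.length = Z.length)
    (ha : ∀ i (hi : i < Z.length) (hia : i < a.length),
      SubstStable Ax (.term Y (a[i]'hia) (subPre Z a i hi)))
    (hfg : MorEq Ax X Y f g) (i : ℕ) (hi : i < Z.length) (hif : i < (compMor Y f a).length)
    (hig : i < (compMor Y g a).length) :
    Derivable Ax (.termEq X ((compMor Y f a)[i]'hif) ((compMor Y g a)[i]'hig)
      (subPre Z (compMor Y f a) i hi)) := by
  rw [getElem_compMor, getElem_compMor, ← subPre_substL hZ hlen]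
  exact (ha i hi _).2 X f g hfg

theorem compMor_argsEq (hZ : IsPreCtx Z) (hlen : a.length = Z.length)
    (hab : ∀ i (hi : i < Z.length) (hia : i < a.length) (hib : i < b.length),
      SubstStable Ax (.termEq Y (a[i]'hia) (b[i]'hib) (subPre Z a i hi)))
    (hf : IsMor Ax X Y f) (i : ℕ) (hi : i < Z.length) (hia : i < (compMor Y f a).length)
    (hib : i < (compMor Y f b).length) :
    Derivable Ax (.termEq X ((compMor Y f a)[i]'hia) ((compMor Y f b)[i]'hib)
      (subPre Z (compMor Y f a) i hi)) := by
  rw [getElem_compMor, getElem_compMor, ← subPre_substL hZ hlen]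
  exact hab i hi _ _ X f hf

theorem SubstStable.sortEq_refl (h : SubstStable Ax (.sort Y U)) :
    SubstStable Ax (.sortEq Y U U) :=
  ⟨fun X f hf => (h.1 X f hf).sortEq_refl, h.2⟩

theorem SubstStable.sortEq_symm (h : SubstStable Ax (.sortEq Y U V)) :
    SubstStable Ax (.sortEq Y V U) :=
  ⟨fun X f hf => (h.1 X f hf).sortEq_symm, fun X f g hfg =>
    ((h.1 X f hfg.1).sortEq_symm.sortEq_trans (h.2 X f g hfg)).sortEq_trans
      (h.1 X g hfg.2.1).sortEq_symm⟩

theorem SubstStable.sortEq_trans (h₁ : SubstStable Ax (.sortEq Y U V))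
    (h₂ : SubstStable Ax (.sortEq Y V W)) : SubstStable Ax (.sortEq Y U W) :=
  ⟨fun X f hf => (h₁.1 X f hf).sortEq_trans (h₂.1 X f hf),
    fun X f g hfg => (h₁.1 X f hfg.1).sortEq_trans (h₂.2 X f g hfg)⟩

theorem SubstStable.term_conv (hUV : SubstStable Ax (.sortEq Y U V))
    (hu : SubstStable Ax (.term Y u U)) : SubstStable Ax (.term Y u V) := by
  refine ⟨fun X f hf => (hUV.1 X f hf).term_conv (hu.1 X f hf), fun X f g hfg => ?_⟩
  have hUfVf := hUV.1 X f hfg.1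
  have hUgVf : Derivable Ax (.sortEq X (U.substL (mkSub Y g)) (V.substL (mkSub Y f))) :=
    (hUV.1 X g hfg.2.1).sortEq_trans ((hUV.2 X f g hfg).sortEq_symm.sortEq_trans hUfVf)
  exact hUfVf.termEq_conv (hu.2 X f g hfg) (hUfVf.term_conv (hu.1 X f hfg.1))
    (hUgVf.term_conv (hu.1 X g hfg.2.1))

theorem substStable_var (i : ℕ) (hi : i < Y.length) :
    SubstStable Ax (.term Y (.var (Y[i]'hi).1) (Y[i]'hi).2) := by
  refine ⟨fun X f ⟨_, hY, hlen, hf⟩ => ?_,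
    fun X f g ⟨⟨_, hY, hlen, _⟩, ⟨_, _, hlen', _⟩, hfg⟩ => ?_⟩
  · rw [Expr.substL_mkSub_var hY.nodup_ctx hi (hlen ▸ hi),
      substL_mkSub_eq_subPre hY.isPreCtx hlen hi]
    exact hf i hi _
  · rw [Expr.substL_mkSub_var hY.nodup_ctx hi (hlen ▸ hi),
      Expr.substL_mkSub_var hY.nodup_ctx hi (hlen' ▸ hi),
      substL_mkSub_eq_subPre hY.isPreCtx hlen hi]
    exact hfg i hi _ _

theorem substStable_sA (hAx : IsPretheory Ax) (hax : .sort Y U ∈ Ax)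
    (hself : Derivable Ax (.sort Y U)) : SubstStable Ax (.sort Y U) := by
  obtain ⟨S, es⟩ := U
  obtain rfl : es = ctxVars Y := hAx.sort_shape _ _ hax
  have hP : ∀ X f, IsMor Ax X Y f → Derivable Ax (.sort X ⟨S, f⟩) :=
    fun X f ⟨hX, _, hlen, hf⟩ => derivable_step (.sSub hax hX.isPreCtx hlen hself hX hf)
  refine ⟨fun X f hf => ?_, fun X f g hfg => ?_⟩
  · rw [SortE.substL_mkSub_ctxVars hf.2.1.nodup_ctx hf.2.2.1]
    exact hP X f hf
  · obtain ⟨hf, hg, hargs⟩ := hfg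
    have ⟨hX, hY, hlf, _⟩ := hf
    have hlg := hg.2.2.1
    rw [SortE.substL_mkSub_ctxVars hY.nodup_ctx hlf, SortE.substL_mkSub_ctxVars hY.nodup_ctx hlg]
    exact derivable_step (.seqSub2 hax hX.isPreCtx hlf hlg hself (hP X f hf) (hP X g hg) hargs)

theorem substStable_tA (hAx : IsPretheory Ax) (hax : .term Y u U ∈ Ax)
    (hself : Derivable Ax (.term Y u U)) (hU : SubstStable Ax (.sort Y U)) :
    SubstStable Ax (.term Y u U) := by
  obtain ⟨t, rfl⟩ := hAx.term_shape Y u U hax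
  have hP : ∀ X f, IsMor Ax X Y f → Derivable Ax (.term X (.app t f) (U.substL (mkSub Y f))) :=
    fun X f hf@⟨hX, _, hlen, hargs⟩ =>
      derivable_step (.tSub hax hX.isPreCtx hlen hself (hU.1 X f hf) hargs)
  refine ⟨fun X f hf => ?_, fun X f g hfg => ?_⟩
  · rw [Expr.substL_mkSub_ctxVars hf.2.1.nodup_ctx hf.2.2.1]
    exact hP X f hf
  · have ⟨hf, hg, hargs⟩ := hfg
    have ⟨hX, hY, hlf, _⟩ := hf
    have hlg := hg.2.2.1
    rw [Expr.substL_mkSub_ctxVars hY.nodup_ctx hlf, Expr.substL_mkSub_ctxVars hY.nodup_ctx hlg]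
    -- `teqSub2` types both sides at `U[f]`, so `t g : U[g]` is converted first.
    exact derivable_step (.teqSub2 hax hX.isPreCtx hlf hlg hself (hP X f hf)
      ((hU.2 X f g hfg).sortEq_symm.term_conv (hP X g hg)) hargs)

theorem substStable_seqA (hax : .sortEq Y U V ∈ Ax) (hself : Derivable Ax (.sortEq Y U V))
    (hU : SubstStable Ax (.sort Y U)) (hV : SubstStable Ax (.sort Y V)) :
    SubstStable Ax (.sortEq Y U V) := by
  have hP : ∀ X f, IsMor Ax X Y f →
      Derivable Ax (.sortEq X (U.substL (mkSub Y f)) (V.substL (mkSub Y f))) :=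
    fun X f hf@⟨hX, _, hlen, hargs⟩ =>
      derivable_step (.seqSub1 hax hX.isPreCtx hlen hself (hU.1 X f hf) (hV.1 X f hf) hargs)
  exact ⟨hP, fun X f g hfg => (hP X f hfg.1).sortEq_trans (hV.2 X f g hfg)⟩

theorem substStable_teqA (hax : .termEq Y u v U ∈ Ax) (hself : Derivable Ax (.termEq Y u v U))
    (hu : SubstStable Ax (.term Y u U)) (hv : SubstStable Ax (.term Y v U)) :
    SubstStable Ax (.termEq Y u v U) :=
  fun X f hf@⟨hX, _, hlen, hargs⟩ =>
    derivable_step (.teqSub1 hax hX.isPreCtx hlen hself (hu.1 X f hf) (hv.1 X f hf) hargs)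

theorem substStable_sSub (hAx : IsPretheory Ax) {S : A.SortSym} (hax : introSort Z S ∈ Ax)
    (hJ : Derivable Ax (introSort Z S)) (hlen : a.length = Z.length)
    (ha : ∀ i (hi : i < Z.length) (hia : i < a.length),
      SubstStable Ax (.term Y (a[i]'hia) (subPre Z a i hi))) :
    SubstStable Ax (.sort Y ⟨S, a⟩) := by
  have hZ : IsPreCtx Z := hAx.wf_ctx _ hax
  have hP : ∀ X f, IsMor Ax X Y f → Derivable Ax (.sort X ⟨S, compMor Y f a⟩) :=
    fun X f hf => derivable_step (.sSub hax hf.1.isPreCtx (by simpa using hlen) hJ hf.1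
      (compMor_args hZ hlen ha hf))
  exact ⟨hP, fun X f g hfg => derivable_step (.seqSub2 hax hfg.1.1.isPreCtx
    (by simpa using hlen) (by simpa using hlen) hJ (hP X f hfg.1) (hP X g hfg.2.1)
    (compMor_args_eq hZ hlen ha hfg))⟩

theorem substStable_tSub (hAx : IsPretheory Ax) {t : A.TermSym} (hax : introTerm Z t U ∈ Ax)
    (hJ : Derivable Ax (introTerm Z t U)) (hlen : a.length = Z.length)
    (hU : SubstStable Ax (.sort Y (U.substL (mkSub Z a))))
    (ha : ∀ i (hi : i < Z.length) (hia : i < a.length),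
      SubstStable Ax (.term Y (a[i]'hia) (subPre Z a i hi))) :
    SubstStable Ax (.term Y (.app t a) (U.substL (mkSub Z a))) := by
  have hZ : IsPreCtx Z := hAx.wf_ctx _ hax
  have hcomp (f : List (Expr A)) :
      (U.substL (mkSub Z a)).substL (mkSub Y f) = U.substL (mkSub Z (compMor Y f a)) :=
    SortE.substL_mkSub_substL (hJ.scoped hAx).2 hlen _
  have hP : ∀ X f, IsMor Ax X Y f →
      Derivable Ax (.term X (.app t (compMor Y f a)) (U.substL (mkSub Z (compMor Y f a)))) :=
    fun X f hf => derivable_step (.tSub hax hf.1.isPreCtx (by simpa using hlen) hJ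
      (hcomp f ▸ hU.1 X f hf) (compMor_args hZ hlen ha hf))
  refine ⟨fun X f hf => ?_, fun X f g hfg => ?_⟩
  · rw [Expr.substL_mkSub_app, hcomp]
    exact hP X f hf
  · have hUgf := hcomp f ▸ hcomp g ▸ (hU.2 X f g hfg).sortEq_symm
    rw [Expr.substL_mkSub_app, Expr.substL_mkSub_app, hcomp]
    exact derivable_step (.teqSub2 hax hfg.1.1.isPreCtx (by simpa using hlen)
      (by simpa using hlen) hJ (hP X f hfg.1) (hUgf.term_conv (hP X g hfg.2.1))
      (compMor_args_eq hZ hlen ha hfg))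

theorem substStable_seqSub1 (hAx : IsPretheory Ax) (hax : .sortEq Z U V ∈ Ax)
    (hJ : Derivable Ax (.sortEq Z U V)) (hlen : a.length = Z.length)
    (hU : SubstStable Ax (.sort Y (U.substL (mkSub Z a))))
    (hV : SubstStable Ax (.sort Y (V.substL (mkSub Z a))))
    (ha : ∀ i (hi : i < Z.length) (hia : i < a.length),
      SubstStable Ax (.term Y (a[i]'hia) (subPre Z a i hi))) :
    SubstStable Ax (.sortEq Y (U.substL (mkSub Z a)) (V.substL (mkSub Z a))) := by
  have hZ : IsPreCtx Z := hAx.wf_ctx _ hax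
  obtain ⟨hUZ, hVZ⟩ := hJ.scoped hAx
  have hP : ∀ X f, IsMor Ax X Y f → Derivable Ax (.sortEq X
      ((U.substL (mkSub Z a)).substL (mkSub Y f)) ((V.substL (mkSub Z a)).substL (mkSub Y f))) := by
    intro X f hf
    have hUf := hU.1 X f hf
    have hVf := hV.1 X f hf
    rw [SortE.substL_mkSub_substL hUZ hlen] at hUf ⊢
    rw [SortE.substL_mkSub_substL hVZ hlen] at hVf ⊢
    exact derivable_step (.seqSub1 hax hf.1.isPreCtx (by simpa using hlen) hJ hUf hVf
      (compMor_args hZ hlen ha hf))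
  exact ⟨hP, fun X f g hfg => (hP X f hfg.1).sortEq_trans (hV.2 X f g hfg)⟩

theorem substStable_seqSub2 (hAx : IsPretheory Ax) {S : A.SortSym} (hax : introSort Z S ∈ Ax)
    (hJ : Derivable Ax (introSort Z S)) (hla : a.length = Z.length) (hlb : b.length = Z.length)
    (hSa : SubstStable Ax (.sort Y ⟨S, a⟩)) (hSb : SubstStable Ax (.sort Y ⟨S, b⟩))
    (hab : ∀ i (hi : i < Z.length) (hia : i < a.length) (hib : i < b.length),
      SubstStable Ax (.termEq Y (a[i]'hia) (b[i]'hib) (subPre Z a i hi))) :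
    SubstStable Ax (.sortEq Y ⟨S, a⟩ ⟨S, b⟩) := by
  have hP : ∀ X f, IsMor Ax X Y f →
      Derivable Ax (.sortEq X ⟨S, compMor Y f a⟩ ⟨S, compMor Y f b⟩) :=
    fun X f hf => derivable_step (.seqSub2 hax hf.1.isPreCtx (by simpa using hla)
      (by simpa using hlb) hJ (hSa.1 X f hf) (hSb.1 X f hf)
      (compMor_argsEq (hAx.wf_ctx _ hax) hla hab hf))
  exact ⟨hP, fun X f g hfg => (hP X f hfg.1).sortEq_trans (hSb.2 X f g hfg)⟩

theorem substStable_teqSub1 (hAx : IsPretheory Ax) (hax : .termEq Z u v U ∈ Ax)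
    (hJ : Derivable Ax (.termEq Z u v U)) (hlen : a.length = Z.length)
    (hu : SubstStable Ax (.term Y (u.substL (mkSub Z a)) (U.substL (mkSub Z a))))
    (hv : SubstStable Ax (.term Y (v.substL (mkSub Z a)) (U.substL (mkSub Z a))))
    (ha : ∀ i (hi : i < Z.length) (hia : i < a.length),
      SubstStable Ax (.term Y (a[i]'hia) (subPre Z a i hi))) :
    SubstStable Ax
      (.termEq Y (u.substL (mkSub Z a)) (v.substL (mkSub Z a)) (U.substL (mkSub Z a))) := by
  obtain ⟨huZ, hvZ, hUZ⟩ := hJ.scoped hAx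
  intro X f hf
  have huf := hu.1 X f hf
  have hvf := hv.1 X f hf
  rw [Expr.substL_mkSub_substL huZ hlen, SortE.substL_mkSub_substL hUZ hlen] at huf
  rw [Expr.substL_mkSub_substL hvZ hlen, SortE.substL_mkSub_substL hUZ hlen] at hvf
  rw [Expr.substL_mkSub_substL huZ hlen, Expr.substL_mkSub_substL hvZ hlen,
    SortE.substL_mkSub_substL hUZ hlen]
  exact derivable_step (.teqSub1 hax hf.1.isPreCtx (by simpa using hlen) hJ huf hvf
    (compMor_args (hAx.wf_ctx _ hax) hlen ha hf))

theorem substStable_teqSub2 (hAx : IsPretheory Ax) {t : A.TermSym} (hax : introTerm Z t U ∈ Ax)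
    (hJ : Derivable Ax (introTerm Z t U)) (hla : a.length = Z.length) (hlb : b.length = Z.length)
    (hta : SubstStable Ax (.term Y (.app t a) (U.substL (mkSub Z a))))
    (htb : SubstStable Ax (.term Y (.app t b) (U.substL (mkSub Z a))))
    (hab : ∀ i (hi : i < Z.length) (hia : i < a.length) (hib : i < b.length),
      SubstStable Ax (.termEq Y (a[i]'hia) (b[i]'hib) (subPre Z a i hi))) :
    SubstStable Ax (.termEq Y (.app t a) (.app t b) (U.substL (mkSub Z a))) := by
  have hUZ : U.ScopedIn Z := (hJ.scoped hAx).2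
  intro X f hf
  have htaf := hta.1 X f hf
  have htbf := htb.1 X f hf
  rw [Expr.substL_mkSub_app, SortE.substL_mkSub_substL hUZ hla] at htaf htbf ⊢
  rw [Expr.substL_mkSub_app]
  exact derivable_step (.teqSub2 hax hf.1.isPreCtx (by simpa using hla) (by simpa using hlb) hJ
    htaf htbf (compMor_argsEq (hAx.wf_ctx _ hax) hla hab hf))

end Stability

theorem Derivable.substStable {Ax : Set (Judg A)} (hAx : IsPretheory Ax) {J : Judg A}
    (h : Derivable Ax J) : SubstStable Ax J := by
  refine Derivable.induction (P := SubstStable Ax) (fun J hJ => ?_) h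
  have hself : Derivable Ax J := derivable_step (hJ.mono fun _ => And.left)
  cases hJ with
  | ctx_nil | ctx_cons => trivial
  | s1 h => exact h.2.sortEq_refl
  | s2 h => exact h.2.sortEq_symm
  | s3 h₁ h₂ => exact h₁.2.sortEq_trans h₂.2
  | t1 h => exact fun X f hf => derivable_step (.t1 (h.2.1 X f hf))
  | t2 h => exact fun X f hf => derivable_step (.t2 (h.2 X f hf))
  | t3 h₁ h₂ => exact fun X f hf => derivable_step (.t3 (h₁.2 X f hf) (h₂.2 X f hf))
  | seqt h₁ h₂ => exact h₁.2.term_conv h₂.2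
  | seqteq h₁ h₂ h₃ h₄ =>
    exact fun X f hf =>
      (h₁.2.1 X f hf).termEq_conv (h₂.2 X f hf) (h₃.2.1 X f hf) (h₄.2.1 X f hf)
  | var hi => exact substStable_var _ hi
  | sA hax => exact substStable_sA hAx hax hself
  | tA hax h => exact substStable_tA hAx hax hself h.2
  | seqA hax h₁ h₂ => exact substStable_seqA hax hself h₁.2 h₂.2
  | teqA hax h₁ h₂ => exact substStable_teqA hax hself h₁.2 h₂.2
  | sSub hax _ hlen hJ _ hargs =>
    exact substStable_sSub hAx hax hJ.1 hlen fun i hi hia => (hargs i hi hia).2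
  | tSub hax _ hlen hJ hU hargs =>
    exact substStable_tSub hAx hax hJ.1 hlen hU.2 fun i hi hia => (hargs i hi hia).2
  | seqSub1 hax _ hlen hJ h₁ h₂ hargs =>
    exact substStable_seqSub1 hAx hax hJ.1 hlen h₁.2 h₂.2 fun i hi hia => (hargs i hi hia).2
  | seqSub2 hax _ hla hlb hJ h₁ h₂ hargs =>
    exact substStable_seqSub2 hAx hax hJ.1 hla hlb h₁.2 h₂.2
      fun i hi hia hib => (hargs i hi hia hib).2
  | teqSub1 hax _ hlen hJ h₁ h₂ hargs =>
    exact substStable_teqSub1 hAx hax hJ.1 hlen h₁.2 h₂.2 fun i hi hia => (hargs i hi hia).2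
  | teqSub2 hax _ hla hlb hJ h₁ h₂ hargs =>
    exact substStable_teqSub2 hAx hax hJ.1 hla hlb h₁.2 h₂.2
      fun i hi hia hib => (hargs i hi hia hib).2

section Morphisms

variable {Ax : Set (Judg A)} {X Y Z : PreCtx A} {f g : List (Expr A)}

theorem MorEq.take (hfg : MorEq Ax X Y f g) {i : ℕ} (hi : i < Y.length) :
    MorEq Ax X (Y.take i) (f.take i) (g.take i) := by
  obtain ⟨⟨hX, hY, hlf, hf⟩, ⟨-, -, hlg, hg⟩, hfg⟩ := hfg
  have hYi : Derivable Ax (.ctx (Y.take i)) := (hY.sort_of_ctx i hi).ctx_of_sort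
  refine ⟨⟨hX, hYi, by simp [hlf], fun j hj _ => ?_⟩, ⟨hX, hYi, by simp [hlg], fun j hj _ => ?_⟩,
    fun j hj _ _ => ?_⟩ <;>
  · have hji : j < i := by simp at hj; omega
    simp only [List.getElem_take, subPre_take hji hj]
    first | exact hf j _ _ | exact hg j _ _ | exact hfg j _ _ _

theorem MorEq.comp (hAx : IsPretheory Ax) (hfg : MorEq Ax X Y f g) {k : List (Expr A)}
    (hk : IsMor Ax Y Z k) : MorEq Ax X Z (compMor Y f k) (compMor Y g k) := by
  obtain ⟨-, hZ, hlen, hargs⟩ := hk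
  have hk i hi hik := (hargs i hi hik).substStable hAx
  exact ⟨⟨hfg.1.1, hZ, by simpa using hlen, compMor_args hZ.isPreCtx hlen hk hfg.1⟩,
    ⟨hfg.1.1, hZ, by simpa using hlen, compMor_args hZ.isPreCtx hlen hk hfg.2.1⟩,
    compMor_args_eq hZ.isPreCtx hlen hk hfg⟩

end Morphisms

/-- In a pretheory, if the morphism equality `f ≡ g : X → Y`
is derivable then: (1) `X ⊢ Yᵢ[f] ≡ Yᵢ[g] sort` is derivable for each `i`;
(2) `f` and `g` are context morphisms `X → Y`; (3) if `Y ⊢ U sort` is derivable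
then so is `X ⊢ U[f] ≡ U[g] sort`; (4) if `Y ⊢ u : U` is derivable then so is
`X ⊢ u[f] ≡ u[g] : U[f]`; (5) if `h : Y → Z` is a context morphism then
`h∘f ≡ h∘g : X → Z` is derivable. -/
theorem morphism_equality_properties (A : Alphabet) (Ax : Set (Judg A))
    (hAx : IsPretheory Ax) (X Y : PreCtx A) (f g : List (Expr A))
    (hfg : MorEq Ax X Y f g) :
    (∀ i (hi : i < Y.length),
        Derivable Ax (.sortEq X ((Y[i]'hi).2.substL (mkSub Y f))
          ((Y[i]'hi).2.substL (mkSub Y g)))) ∧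
    IsMor Ax X Y f ∧ IsMor Ax X Y g ∧
    (∀ U : SortE A, Derivable Ax (.sort Y U) →
        Derivable Ax (.sortEq X (U.substL (mkSub Y f)) (U.substL (mkSub Y g)))) ∧
    (∀ (u : Expr A) (U : SortE A), Derivable Ax (.term Y u U) →
        Derivable Ax (.termEq X (u.substL (mkSub Y f)) (u.substL (mkSub Y g))
          (U.substL (mkSub Y f)))) ∧
    (∀ (Z : PreCtx A) (k : List (Expr A)), IsMor Ax Y Z k →
        MorEq Ax X Z (compMor Y f k) (compMor Y g k)) := by
  refine ⟨fun i hi => ?_, hfg.1, hfg.2.1, fun U hU => (hU.substStable hAx).2 X f g hfg,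
    fun u U hu => (hu.substStable hAx).2 X f g hfg, fun Z k hk => hfg.comp hAx hk⟩
  have hY := hfg.1.2.1
  rw [substL_mkSub_eq_subPre hY.isPreCtx hfg.1.2.2.1 hi,
    substL_mkSub_eq_subPre hY.isPreCtx hfg.2.1.2.2.1 hi]
  exact ((hY.sort_of_ctx i hi).substStable hAx).2 X _ _ (hfg.take hi)

end GATPaper
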